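/- The biconvex (Fenchel biconjugate) envelope of the function f(M) = ½‖M‖_F² + χ_{rank(M) ≤ r}(M) on real n×m matrices equals ½‖M‖_{F,r*}², half the squared low-rank inducing Frobenius norm. -/

import Mathlib

open Matrix BigOperators Finset

/-- Singular values of a real `n × m` matrix, in nonincreasing order, 0-indexed:
`sv M 0 ≥ sv M 1 ≥ …` are the singular values (square roots of the eigenvalues of `Mᵀ M`). -/
noncomputable def sv {n m : ℕ} (M : Matrix (Fin n) (Fin m) ℝ) (i : ℕ) : ℝ :=
  (((List.ofFn fun j : Fin m =>
      Real.sqrt ((show (Mᵀ * M).IsHermitian from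
        Matrix.conjTranspose_eq_transpose_of_trivial M ▸
          Matrix.isHermitian_conjTranspose_mul_self M).eigenvalues j)).mergeSort
      (fun a b => decide (a ≥ b))).getD i 0)

/-- Trace inner product `⟨M, Y⟩ = tr (Mᵀ Y)`. -/
def ip {n m : ℕ} (M Y : Matrix (Fin n) (Fin m) ℝ) : ℝ := ∑ i, ∑ j, M i j * Y i j

/-- Frobenius norm. -/
noncomputable def fro {n m : ℕ} (M : Matrix (Fin n) (Fin m) ℝ) : ℝ :=
  Real.sqrt (∑ i, ∑ j, M i j ^ 2)

/-- Truncated Frobenius norm `‖M‖_{F,r} = sqrt (σ₁² + ⋯ + σᵣ²)`. -/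
noncomputable def truncFro {n m : ℕ} (r : ℕ) (M : Matrix (Fin n) (Fin m) ℝ) : ℝ :=
  Real.sqrt (∑ i ∈ Finset.range r, sv M i ^ 2)

/-- Dual norm with respect to the trace inner product. -/
noncomputable def dualNorm {n m : ℕ} (ν : Matrix (Fin n) (Fin m) ℝ → ℝ)
    (M : Matrix (Fin n) (Fin m) ℝ) : ℝ :=
  sSup {c : ℝ | ∃ Y, ν Y ≤ 1 ∧ c = ip M Y}

/-- Low-rank inducing Frobenius norm `‖·‖_{F,r*}`, the dual of `‖·‖_{F,r}`. -/
noncomputable def lowRankFro {n m : ℕ} (r : ℕ) (M : Matrix (Fin n) (Fin m) ℝ) : ℝ :=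
  dualNorm (truncFro r) M

/-- Ky Fan `r`-norm: sum of the `r` largest singular values. -/
noncomputable def kyFan {n m : ℕ} (r : ℕ) (M : Matrix (Fin n) (Fin m) ℝ) : ℝ :=
  ∑ i ∈ Finset.range r, sv M i

/-- Nuclear norm: sum of all singular values. -/
noncomputable def nuclear {n m : ℕ} (M : Matrix (Fin n) (Fin m) ℝ) : ℝ :=
  ∑ i ∈ Finset.range (min n m), sv M i

/-- Fenchel conjugate (with trace inner product) of an extended-real-valued function. -/
noncomputable def fconj {n m : ℕ} (f : Matrix (Fin n) (Fin m) ℝ → EReal)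
    (Y : Matrix (Fin n) (Fin m) ℝ) : EReal :=
  ⨆ M, ((ip M Y : ℝ) : EReal) - f M

/-- `f(M) = ½‖M‖_F² + χ_{rank M ≤ r}(M)`. -/
noncomputable def fRank {n m : ℕ} (r : ℕ) (M : Matrix (Fin n) (Fin m) ℝ) : EReal :=
  if M.rank ≤ r then ((2⁻¹ * fro M ^ 2 : ℝ) : EReal) else ⊤

/-!
The conjugate of `f` is `f* = ½‖·‖²_{F,r}`. For `rank M ≤ r` write `M = M P` with `P` the
orthogonal projection onto the row space of `M` (trace `P` = rank `M`); then Cauchy–Schwarz and Ky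
Fan's maximum principle `tr (Yᵀ Y P) ≤ ‖Y‖²_{F,r}` give `⟨M, Y⟩ ≤ ‖M‖_F ‖Y P‖_F ≤ ‖M‖_F ‖Y‖_{F,r}`,
hence `⟨M, Y⟩ - ½‖M‖²_F ≤ ½‖Y‖²_{F,r}`; equality holds for `M = Y P` with `P` the projection onto
the top `r` eigenvectors of `Yᵀ Y`. Finally, for any positively homogeneous gauge `ν` the conjugate
of `½ ν²` is `½ ν_D²`, where `ν_D` is the dual gauge, and the dual of `‖·‖_{F,r}` is `‖·‖_{F,r*}`.
-/


lemma List.exists_perm_mergeSort_ge_ofFn {α : Type*} [LinearOrder α] {m : ℕ} (f : Fin m → α) :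
    ∃ e : Equiv.Perm (Fin m), Antitone (f ∘ e) ∧
      (List.ofFn f).mergeSort (fun a b => decide (a ≥ b)) = List.ofFn (f ∘ e) := by
  have hanti : Antitone (f ∘ (Fin.revPerm.trans (Tuple.sort f))) := fun i j hij =>
    Tuple.monotone_sort f (Fin.rev_le_rev.2 hij)
  refine ⟨_, hanti, List.Perm.eq_of_sortedGE List.sortedGE_mergeSort hanti.sortedGE_ofFn ?_⟩
  exact (List.mergeSort_perm _ _).trans (Equiv.Perm.ofFn_comp_perm _ f).symm

lemma Matrix.isStarProjection_diagonal_ite {𝕜 ι : Type*} [RCLike 𝕜] [Fintype ι] [DecidableEq ι]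
    (S : Finset ι) :
    IsStarProjection (diagonal fun j => if j ∈ S then (1 : 𝕜) else 0) where
  isIdempotentElem := by
    rw [IsIdempotentElem, diagonal_mul_diagonal]
    congr 1; ext j; split_ifs <;> simp
  isSelfAdjoint := by
    rw [IsSelfAdjoint, star_eq_conjTranspose, diagonal_conjTranspose]
    congr 1; ext j; split_ifs <;> simp [*]

namespace Matrix.IsHermitian

variable {𝕜 ι : Type*} [RCLike 𝕜] [Fintype ι] [DecidableEq ι] {A : Matrix ι ι 𝕜}
  (hA : A.IsHermitian)

lemma trace_mul_eq_sum_eigenvalues_mul (B : Matrix ι ι 𝕜) :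
    (A * B).trace = ∑ j, (hA.eigenvalues j : 𝕜) *
      (star (hA.eigenvectorUnitary : Matrix ι ι 𝕜) * B * hA.eigenvectorUnitary) j j := by
  conv_lhs => rw [hA.spectral_theorem, Unitary.conjStarAlgAut_apply, Matrix.mul_assoc,
    Matrix.mul_assoc, trace_mul_comm]
  simp only [trace, diag_apply, Matrix.mul_assoc, diagonal_mul, Function.comp_apply]

noncomputable def spectralProj (S : Finset ι) : Matrix ι ι 𝕜 :=
  Unitary.conjStarAlgAut 𝕜 _ hA.eigenvectorUnitary (diagonal fun j => if j ∈ S then 1 else 0)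

lemma isStarProjection_spectralProj (S : Finset ι) : IsStarProjection (hA.spectralProj S) :=
  (isStarProjection_diagonal_ite S).map _

lemma star_eigenvectorUnitary_mul_spectralProj_mul (S : Finset ι) :
    star (hA.eigenvectorUnitary : Matrix ι ι 𝕜) * hA.spectralProj S *
      (hA.eigenvectorUnitary : Matrix ι ι 𝕜) = diagonal fun j => if j ∈ S then 1 else 0 := by
  rw [spectralProj, Unitary.conjStarAlgAut_apply]
  simp only [← Matrix.mul_assoc, Unitary.coe_star_mul_self, Matrix.one_mul]
  rw [Matrix.mul_assoc, Unitary.coe_star_mul_self, Matrix.mul_one]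

lemma trace_mul_spectralProj (S : Finset ι) :
    (A * hA.spectralProj S).trace = ∑ j ∈ S, (hA.eigenvalues j : 𝕜) := by
  rw [hA.trace_mul_eq_sum_eigenvalues_mul, hA.star_eigenvectorUnitary_mul_spectralProj_mul]
  simp [Finset.sum_ite_mem]

lemma trace_spectralProj (S : Finset ι) : (hA.spectralProj S).trace = S.card := by
  rw [spectralProj, Unitary.conjStarAlgAut_apply, trace_mul_cycle, Unitary.coe_star_mul_self,
    Matrix.one_mul, trace_diagonal]
  simp [Finset.sum_ite_mem]

lemma rank_spectralProj_le (S : Finset ι) : (hA.spectralProj S).rank ≤ S.card := by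
  rw [spectralProj, Unitary.conjStarAlgAut_apply]
  refine ((rank_mul_le_left _ _).trans (rank_mul_le_right _ _)).trans ?_
  rw [rank_diagonal]
  simp

lemma mul_spectralProj_of_subset {S : Finset ι} (hS : ∀ j, hA.eigenvalues j ≠ 0 → j ∈ S) :
    A * hA.spectralProj S = A := by
  set U : Matrix ι ι 𝕜 := (hA.eigenvectorUnitary : Matrix ι ι 𝕜)
  set D : Matrix ι ι 𝕜 := diagonal (RCLike.ofReal ∘ hA.eigenvalues)
  set DS : Matrix ι ι 𝕜 := diagonal fun j => if j ∈ S then 1 else 0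
  have hA' : A = U * D * star U := hA.spectral_theorem
  have hD : D * DS = D := by
    rw [diagonal_mul_diagonal]
    congr 1; ext j
    by_cases hj : hA.eigenvalues j = 0 <;> simp [hj, hS j]
  calc A * hA.spectralProj S = U * D * star U * (U * DS * star U) := by rw [← hA']; rfl
    _ = U * (D * DS) * star U := by
        simp only [Matrix.mul_assoc, ← Matrix.mul_assoc (star U) U, U, Unitary.coe_star_mul_self,
          Matrix.one_mul]
    _ = A := by rw [hD, hA']

end Matrix.IsHermitian

lemma IsStarProjection.transpose_eq {ι : Type*} [Fintype ι] {P : Matrix ι ι ℝ}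
    (hP : IsStarProjection P) : Pᵀ = P := by
  rw [← conjTranspose_eq_transpose_of_trivial, ← star_eq_conjTranspose, hP.isSelfAdjoint.star_eq]

lemma IsStarProjection.posSemidef {ι : Type*} [Fintype ι] {P : Matrix ι ι ℝ}
    (hP : IsStarProjection P) : P.PosSemidef := by
  have h : P = Pᴴ * P := by
    rw [← star_eq_conjTranspose, hP.isSelfAdjoint.star_eq, hP.isIdempotentElem.eq]
  exact h ▸ posSemidef_conjTranspose_mul_self P

lemma IsStarProjection.diag_mem_Icc {ι : Type*} [Fintype ι] [DecidableEq ι] {P : Matrix ι ι ℝ}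
    (hP : IsStarProjection P) (j : ι) : P j j ∈ Set.Icc 0 1 := by
  have h := hP.one_sub.posSemidef.diag_nonneg (i := j)
  rw [Matrix.sub_apply, one_apply_eq, sub_nonneg] at h
  exact ⟨hP.posSemidef.diag_nonneg, h⟩

lemma sum_mul_le_sum_range_of_antitone {q : ℕ → ℝ} (hq : Antitone q) (hq0 : ∀ i, 0 ≤ q i)
    {m r : ℕ} (hrm : r ≤ m) {c : Fin m → ℝ} (hc : ∀ j, c j ∈ Set.Icc 0 1)
    (hcs : ∑ j, c j ≤ r) :
    ∑ j : Fin m, q j * c j ≤ ∑ i ∈ range r, q i := by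
  set θ := q (r - 1)
  have hpoint (j : Fin m) : q j * c j ≤ θ * c j + if (j : ℕ) < r then q j - θ else 0 := by
    obtain ⟨hc0, hc1⟩ := hc j
    split_ifs with hj
    · nlinarith [hq (Nat.le_sub_one_of_lt hj)]
    · nlinarith [hq (show r - 1 ≤ j by omega)]
  have hfilter : ∑ j : Fin m, (if (j : ℕ) < r then q j - θ else 0) = ∑ i ∈ range r, (q i - θ) := by
    rw [Fin.sum_univ_eq_sum_range (fun i => if i < r then q i - θ else 0), ← Finset.sum_filter]
    congr 1
    ext i
    simp only [Finset.mem_filter, Finset.mem_range]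
    omega
  calc ∑ j : Fin m, q j * c j
      ≤ θ * ∑ j, c j + ∑ i ∈ range r, (q i - θ) := by
        rw [Finset.mul_sum, ← hfilter, ← Finset.sum_add_distrib]
        exact Finset.sum_le_sum fun j _ => hpoint j
    _ ≤ θ * r + ∑ i ∈ range r, (q i - θ) := by gcongr; exact hq0 _
    _ = ∑ i ∈ range r, q i := by simp [Finset.sum_sub_distrib]; ring

lemma Matrix.isHermitian_transpose_mul_self {m n : Type*} [Fintype m] (Y : Matrix m n ℝ) :
    (Yᵀ * Y).IsHermitian :=
  conjTranspose_eq_transpose_of_trivial Y ▸ isHermitian_conjTranspose_mul_self Y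

section SingularValues

variable {n m : ℕ} (Y : Matrix (Fin n) (Fin m) ℝ)

lemma eigenvalues_transpose_mul_self_nonneg (j : Fin m) :
    0 ≤ (isHermitian_transpose_mul_self Y).eigenvalues j := by
  have h := posSemidef_conjTranspose_mul_self Y
  rw [conjTranspose_eq_transpose_of_trivial] at h
  exact h.eigenvalues_nonneg j

noncomputable def svPerm : Equiv.Perm (Fin m) :=
  (List.exists_perm_mergeSort_ge_ofFn
    fun j => √((isHermitian_transpose_mul_self Y).eigenvalues j)).choose

lemma svPerm_spec :
    Antitone (fun i => √((isHermitian_transpose_mul_self Y).eigenvalues (svPerm Y i))) ∧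
      (List.ofFn fun j => √((isHermitian_transpose_mul_self Y).eigenvalues j)).mergeSort
          (fun a b => decide (a ≥ b)) =
        List.ofFn fun i => √((isHermitian_transpose_mul_self Y).eigenvalues (svPerm Y i)) :=
  (List.exists_perm_mergeSort_ge_ofFn
    fun j => √((isHermitian_transpose_mul_self Y).eigenvalues j)).choose_spec

lemma sv_eq_getD (i : ℕ) :
    sv Y i = (List.ofFn fun j =>
      √((isHermitian_transpose_mul_self Y).eigenvalues (svPerm Y j))).getD i 0 :=
  congrArg (·.getD i 0) (svPerm_spec Y).2

lemma sv_of_lt {i : ℕ} (hi : i < m) :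
    sv Y i = √((isHermitian_transpose_mul_self Y).eigenvalues (svPerm Y ⟨i, hi⟩)) := by
  simp [sv_eq_getD, hi]

lemma sv_of_le {i : ℕ} (hi : m ≤ i) : sv Y i = 0 := by
  simp [sv_eq_getD, hi]

lemma sv_nonneg (i : ℕ) : 0 ≤ sv Y i := by
  rcases lt_or_ge i m with hi | hi
  · exact sv_of_lt Y hi ▸ Real.sqrt_nonneg _
  · exact (sv_of_le Y hi).ge

lemma sv_antitone : Antitone (sv Y) := by
  intro i j hij
  rcases lt_or_ge j m with hj | hj
  · rw [sv_of_lt Y hj, sv_of_lt Y (hij.trans_lt hj)]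
    exact (svPerm_spec Y).1 (show (⟨i, _⟩ : Fin m) ≤ ⟨j, hj⟩ from hij)
  · exact sv_of_le Y hj ▸ sv_nonneg Y i

lemma sq_sv_of_lt {i : ℕ} (hi : i < m) :
    sv Y i ^ 2 = (isHermitian_transpose_mul_self Y).eigenvalues (svPerm Y ⟨i, hi⟩) := by
  rw [sv_of_lt Y hi, Real.sq_sqrt (eigenvalues_transpose_mul_self_nonneg Y _)]

lemma sum_eigenvalues_mul_eq_sum_sq_sv_mul (g : Fin m → ℝ) :
    ∑ j, (isHermitian_transpose_mul_self Y).eigenvalues j * g j =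
      ∑ i : Fin m, sv Y i ^ 2 * g (svPerm Y i) := by
  rw [← Equiv.sum_comp (svPerm Y)]
  exact Finset.sum_congr rfl fun i _ => by rw [sq_sv_of_lt Y i.isLt]

end SingularValues

lemma truncFro_nonneg {n m : ℕ} (r : ℕ) (Y : Matrix (Fin n) (Fin m) ℝ) : 0 ≤ truncFro r Y :=
  Real.sqrt_nonneg _

lemma truncFro_sq {n m : ℕ} (r : ℕ) (Y : Matrix (Fin n) (Fin m) ℝ) :
    truncFro r Y ^ 2 = ∑ i ∈ range r, sv Y i ^ 2 :=
  Real.sq_sqrt (Finset.sum_nonneg fun _ _ => sq_nonneg _)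

section KyFan

variable {n m : ℕ} (Y : Matrix (Fin n) (Fin m) ℝ)

/-- Ky Fan's maximum principle (`‖Y‖²_{F,r}` is the sum of the `r` largest eigenvalues of
`Yᵀ Y`). -/
lemma trace_gram_mul_le_truncFro_sq {r : ℕ} (hrm : r ≤ m) {P : Matrix (Fin m) (Fin m) ℝ}
    (hP : IsStarProjection P) (htr : P.trace ≤ r) : (Yᵀ * Y * P).trace ≤ truncFro r Y ^ 2 := by
  set hY := isHermitian_transpose_mul_self Y
  set U : Matrix (Fin m) (Fin m) ℝ := (hY.eigenvectorUnitary : Matrix (Fin m) (Fin m) ℝ)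
  have hQ : IsStarProjection (star U * P * U) := by
    simpa [Unitary.conjStarAlgAut_star_apply] using
      hP.map (Unitary.conjStarAlgAut ℝ _ (star hY.eigenvectorUnitary))
  have htrQ : (star U * P * U).trace = P.trace := by
    rw [trace_mul_cycle]
    simp only [U, ← Unitary.coe_star, Unitary.coe_mul_star_self, Matrix.one_mul]
  -- in the eigenbasis of `Yᵀ Y` the diagonal of `P` has entries in `[0, 1]` summing to `tr P ≤ r`
  rw [hY.trace_mul_eq_sum_eigenvalues_mul]
  simp only [RCLike.ofReal_real_eq_id, id]
  rw [sum_eigenvalues_mul_eq_sum_sq_sv_mul, truncFro_sq]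
  refine sum_mul_le_sum_range_of_antitone
    (fun _ j h => pow_le_pow_left₀ (sv_nonneg Y j) (sv_antitone Y h) 2) (fun i => sq_nonneg _) hrm
    (fun j => hQ.diag_mem_Icc _) ?_
  rw [Equiv.sum_comp (svPerm Y) (fun j => (star U * P * U) j j)]
  exact htrQ.trans_le htr

lemma exists_isStarProjection_trace_gram_mul_eq {r : ℕ} (hrm : r ≤ m) :
    ∃ P : Matrix (Fin m) (Fin m) ℝ, IsStarProjection P ∧ P.trace = r ∧ P.rank ≤ r ∧
      (Yᵀ * Y * P).trace = truncFro r Y ^ 2 := by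
  set hY := isHermitian_transpose_mul_self Y
  set S : Finset (Fin m) := Finset.univ.map ((Fin.castLEEmb hrm).trans (svPerm Y).toEmbedding)
  have hS : S.card = r := by simp [S]
  refine ⟨hY.spectralProj S, hY.isStarProjection_spectralProj S,
    by rw [hY.trace_spectralProj, hS], hS ▸ hY.rank_spectralProj_le S, ?_⟩
  rw [hY.trace_mul_spectralProj, truncFro_sq, ← Fin.sum_univ_eq_sum_range]
  simp only [S, Finset.sum_map, RCLike.ofReal_real_eq_id, id]
  exact Finset.sum_congr rfl fun l _ => (sq_sv_of_lt Y (l.isLt.trans_le hrm)).symm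

end KyFan

lemma exists_isStarProjection_trace_eq_rank_mul_eq_self {ι κ : Type*} [Fintype ι] [Fintype κ]
    [DecidableEq κ] (M : Matrix ι κ ℝ) :
    ∃ P : Matrix κ κ ℝ, IsStarProjection P ∧ P.trace = M.rank ∧ M * P = M := by
  set hM := isHermitian_transpose_mul_self M
  set S := Finset.univ.filter fun j => hM.eigenvalues j ≠ 0
  refine ⟨hM.spectralProj S, hM.isStarProjection_spectralProj S, ?_, ?_⟩
  · rw [hM.trace_spectralProj, ← rank_transpose_mul_self, hM.rank_eq_card_non_zero_eigs,
      Fintype.card_subtype]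
  · have h0 : Mᴴ * M * (1 - hM.spectralProj S) = 0 := by
      rw [conjTranspose_eq_transpose_of_trivial, Matrix.mul_sub, Matrix.mul_one,
        hM.mul_spectralProj_of_subset (by simp [S]), sub_self]
    rw [conjTranspose_mul_self_mul_eq_zero, Matrix.mul_sub, Matrix.mul_one, sub_eq_zero] at h0
    exact h0.symm

section TraceInnerProduct

variable {n m : ℕ}

lemma ip_eq_trace (M Y : Matrix (Fin n) (Fin m) ℝ) : ip M Y = (Mᵀ * Y).trace := by
  simp only [ip, trace, diag_apply, mul_apply, transpose_apply]
  exact Finset.sum_comm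

lemma ip_comm (M Y : Matrix (Fin n) (Fin m) ℝ) : ip M Y = ip Y M := by
  simp only [ip, mul_comm]

lemma ip_smul_right (c : ℝ) (M Y : Matrix (Fin n) (Fin m) ℝ) : ip M (c • Y) = c * ip M Y := by
  simp only [ip, Matrix.smul_apply, smul_eq_mul, Finset.mul_sum, mul_left_comm]

lemma fro_nonneg (M : Matrix (Fin n) (Fin m) ℝ) : 0 ≤ fro M := Real.sqrt_nonneg _

lemma fro_sq_eq_ip (M : Matrix (Fin n) (Fin m) ℝ) : fro M ^ 2 = ip M M := by
  rw [fro, Real.sq_sqrt (by positivity)]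
  simp only [ip, sq]

lemma ip_le_fro_mul_fro (M Y : Matrix (Fin n) (Fin m) ℝ) : ip M Y ≤ fro M * fro Y := by
  rw [ip, fro, fro, ← Fintype.sum_prod_type', ← Fintype.sum_prod_type',
    ← Fintype.sum_prod_type']
  exact Real.sum_mul_le_sqrt_mul_sqrt _ (fun p : Fin n × Fin m => M p.1 p.2) (fun p => Y p.1 p.2)

variable {P : Matrix (Fin m) (Fin m) ℝ} (hP : IsStarProjection P)
include hP

lemma ip_mul_eq_trace_gram_mul (Y : Matrix (Fin n) (Fin m) ℝ) :
    ip (Y * P) Y = (Yᵀ * Y * P).trace := by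
  rw [ip_eq_trace, transpose_mul, hP.transpose_eq, Matrix.mul_assoc, trace_mul_comm]

lemma fro_mul_sq_eq_trace_gram_mul (Y : Matrix (Fin n) (Fin m) ℝ) :
    fro (Y * P) ^ 2 = (Yᵀ * Y * P).trace := by
  rw [fro_sq_eq_ip, ip_eq_trace, transpose_mul, hP.transpose_eq, ← Matrix.mul_assoc,
    trace_mul_cycle, ← Matrix.mul_assoc P P, hP.isIdempotentElem.eq, Matrix.mul_assoc,
    trace_mul_comm]

lemma ip_mul_right_of_mul_eq_self {M : Matrix (Fin n) (Fin m) ℝ} (hMP : M * P = M)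
    (Y : Matrix (Fin n) (Fin m) ℝ) : ip M (Y * P) = ip M Y := by
  conv_rhs => rw [← hMP]
  rw [ip_eq_trace, ip_eq_trace, transpose_mul, hP.transpose_eq, ← Matrix.mul_assoc,
    trace_mul_cycle, Matrix.mul_assoc]

end TraceInnerProduct

lemma fro_sq_eq_sum_sq_sv {n m : ℕ} (Y : Matrix (Fin n) (Fin m) ℝ) :
    fro Y ^ 2 = ∑ i ∈ range m, sv Y i ^ 2 := by
  have h := sum_eigenvalues_mul_eq_sum_sq_sv_mul Y 1
  simp only [Pi.one_apply, mul_one] at h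
  rw [fro_sq_eq_ip, ip_eq_trace, (isHermitian_transpose_mul_self Y).trace_eq_sum_eigenvalues]
  simpa [← Fin.sum_univ_eq_sum_range] using h

lemma ip_le_mul_truncFro {n m r : ℕ} (hr : 1 ≤ r) (M Y : Matrix (Fin n) (Fin m) ℝ) :
    ip M Y ≤ fro M * √m * truncFro r Y := by
  have hsv : ∀ i, sv Y i ^ 2 ≤ truncFro r Y ^ 2 := fun i => by
    rw [truncFro_sq]
    calc sv Y i ^ 2 ≤ sv Y 0 ^ 2 := pow_le_pow_left₀ (sv_nonneg Y i) (sv_antitone Y i.zero_le) 2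
      _ ≤ ∑ i ∈ range r, sv Y i ^ 2 :=
        Finset.single_le_sum (fun i _ => sq_nonneg (sv Y i)) (Finset.mem_range.2 hr)
  have hfro : fro Y ≤ √m * truncFro r Y := by
    rw [← Real.sqrt_sq (fro_nonneg Y), ← Real.sqrt_sq (truncFro_nonneg r Y), ← Real.sqrt_mul
      m.cast_nonneg, fro_sq_eq_sum_sq_sv]
    refine Real.sqrt_le_sqrt ((Finset.sum_le_sum fun i _ => hsv i).trans_eq ?_)
    simp
  calc ip M Y ≤ fro M * fro Y := ip_le_fro_mul_fro M Y
    _ ≤ fro M * (√m * truncFro r Y) := mul_le_mul_of_nonneg_left hfro (fro_nonneg M)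
    _ = fro M * √m * truncFro r Y := by ring

section LowRankConjugate

variable {n m r : ℕ} (hrm : r ≤ m)
include hrm

lemma ip_le_fro_mul_truncFro_of_rank_le {M : Matrix (Fin n) (Fin m) ℝ} (hM : M.rank ≤ r)
    (Y : Matrix (Fin n) (Fin m) ℝ) : ip M Y ≤ fro M * truncFro r Y := by
  obtain ⟨P, hP, htr, hMP⟩ := exists_isStarProjection_trace_eq_rank_mul_eq_self M
  have hYP : fro (Y * P) ≤ truncFro r Y := by
    refine (pow_le_pow_iff_left₀ (fro_nonneg _) (truncFro_nonneg _ _) two_ne_zero).1 ?_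
    rw [fro_mul_sq_eq_trace_gram_mul hP]
    exact trace_gram_mul_le_truncFro_sq Y hrm hP (htr ▸ by exact_mod_cast hM)
  calc ip M Y = ip M (Y * P) := (ip_mul_right_of_mul_eq_self hP hMP Y).symm
    _ ≤ fro M * fro (Y * P) := ip_le_fro_mul_fro _ _
    _ ≤ fro M * truncFro r Y := mul_le_mul_of_nonneg_left hYP (fro_nonneg M)

lemma fconj_fRank (Y : Matrix (Fin n) (Fin m) ℝ) :
    fconj (fRank r) Y = ((2⁻¹ * truncFro r Y ^ 2 : ℝ) : EReal) := by
  apply le_antisymm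
  · refine iSup_le fun M => ?_
    rw [fRank]
    split_ifs with hM
    · rw [← EReal.coe_sub, EReal.coe_le_coe_iff]
      nlinarith [ip_le_fro_mul_truncFro_of_rank_le hrm hM Y, sq_nonneg (fro M - truncFro r Y)]
    · simp
  · obtain ⟨P, hP, -, hrank, htrace⟩ := exists_isStarProjection_trace_gram_mul_eq Y hrm
    refine le_trans (le_of_eq ?_) (le_iSup _ (Y * P))
    rw [fRank, if_pos ((rank_mul_le_right _ _).trans hrank), ip_mul_eq_trace_gram_mul hP,
      fro_mul_sq_eq_trace_gram_mul hP, htrace, ← EReal.coe_sub]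
    exact congrArg _ (by ring)

lemma sq_truncFro_smul_le (c : ℝ) (Y : Matrix (Fin n) (Fin m) ℝ) :
    truncFro r (c • Y) ^ 2 ≤ c ^ 2 * truncFro r Y ^ 2 := by
  obtain ⟨P, hP, htr, -, hval⟩ := exists_isStarProjection_trace_gram_mul_eq (c • Y) hrm
  have hscale : ((c • Y)ᵀ * (c • Y) * P).trace = c ^ 2 * (Yᵀ * Y * P).trace := by
    simp only [transpose_smul, Matrix.smul_mul, Matrix.mul_smul, smul_smul, trace_smul, smul_eq_mul,
      sq]
  rw [← hval, hscale]
  exact mul_le_mul_of_nonneg_left (trace_gram_mul_le_truncFro_sq Y hrm hP htr.le) (sq_nonneg c)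

lemma truncFro_smul {c : ℝ} (hc : 0 < c) (Y : Matrix (Fin n) (Fin m) ℝ) :
    truncFro r (c • Y) = c * truncFro r Y := by
  have hge : c ^ 2 * truncFro r Y ^ 2 ≤ truncFro r (c • Y) ^ 2 := by
    have h := sq_truncFro_smul_le hrm c⁻¹ (c • Y)
    rw [smul_smul, inv_mul_cancel₀ hc.ne', one_smul, inv_pow, ← div_eq_inv_mul,
      le_div_iff₀ (by positivity)] at h
    linarith
  rw [← sq_eq_sq₀ (truncFro_nonneg _ _) (mul_nonneg hc.le (truncFro_nonneg _ _)), mul_pow]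
  exact (sq_truncFro_smul_le hrm c Y).antisymm hge

end LowRankConjugate

section HalfSquareConjugate

variable {n m : ℕ} {ν : Matrix (Fin n) (Fin m) ℝ → ℝ} {M : Matrix (Fin n) (Fin m) ℝ}

lemma map_zero_of_map_smul (hν : ∀ c : ℝ, 0 < c → ∀ Y, ν (c • Y) = c * ν Y) : ν 0 = 0 := by
  have h := hν 2 two_pos 0
  rw [smul_zero] at h
  linarith

lemma le_dualNorm (hν0 : ∀ Y, 0 ≤ ν Y) (hM : ∃ C, ∀ Y, ip M Y ≤ C * ν Y)
    {Y : Matrix (Fin n) (Fin m) ℝ} (hY : ν Y ≤ 1) : ip M Y ≤ dualNorm ν M := by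
  obtain ⟨C, hC⟩ := hM
  refine le_csSup ⟨max C 0, ?_⟩ ⟨Y, hY, rfl⟩
  rintro _ ⟨Z, hZ, rfl⟩
  calc ip M Z ≤ C * ν Z := hC Z
    _ ≤ max C 0 * ν Z := mul_le_mul_of_nonneg_right (le_max_left _ _) (hν0 Z)
    _ ≤ max C 0 := mul_le_of_le_one_right (le_max_right _ _) hZ

lemma dualNorm_nonneg (hν0 : ∀ Y, 0 ≤ ν Y) (hν : ∀ c : ℝ, 0 < c → ∀ Y, ν (c • Y) = c * ν Y)
    (hM : ∃ C, ∀ Y, ip M Y ≤ C * ν Y) : 0 ≤ dualNorm ν M := by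
  simpa [ip] using le_dualNorm hν0 hM (Y := 0) (by rw [map_zero_of_map_smul hν]; exact zero_le_one)

lemma ip_le_mul_dualNorm (hν0 : ∀ Y, 0 ≤ ν Y) (hν : ∀ c : ℝ, 0 < c → ∀ Y, ν (c • Y) = c * ν Y)
    (hM : ∃ C, ∀ Y, ip M Y ≤ C * ν Y) (Y : Matrix (Fin n) (Fin m) ℝ) :
    ip M Y ≤ ν Y * dualNorm ν M := by
  rcases (hν0 Y).eq_or_lt with h0 | hpos
  · obtain ⟨C, hC⟩ := hM
    simpa [← h0] using hC Y
  · have h := le_dualNorm hν0 hM (Y := (ν Y)⁻¹ • Y)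
      (by rw [hν _ (inv_pos.2 hpos), inv_mul_cancel₀ hpos.ne'])
    rwa [ip_smul_right, inv_mul_le_iff₀ hpos] at h

lemma fconj_coe_of_bddAbove {f : Matrix (Fin n) (Fin m) ℝ → ℝ}
    (hf : BddAbove (Set.range fun Y => ip Y M - f Y)) :
    fconj (fun Y => (f Y : EReal)) M = ((⨆ Y, (ip Y M - f Y) : ℝ) : EReal) := by
  rw [fconj, Monotone.map_ciSup_of_continuousAt continuous_coe_real_ereal.continuousAt
    EReal.coe_strictMono.monotone hf]
  simp only [EReal.coe_sub]

theorem fconj_half_sq_eq_half_sq_dualNorm (hν0 : ∀ Y, 0 ≤ ν Y)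
    (hν : ∀ c : ℝ, 0 < c → ∀ Y, ν (c • Y) = c * ν Y) (hM : ∃ C, ∀ Y, ip M Y ≤ C * ν Y) :
    fconj (fun Y => ((2⁻¹ * ν Y ^ 2 : ℝ) : EReal)) M = ((2⁻¹ * dualNorm ν M ^ 2 : ℝ) : EReal) := by
  set d := dualNorm ν M
  set F : Matrix (Fin n) (Fin m) ℝ → ℝ := fun Y => ip Y M - 2⁻¹ * ν Y ^ 2
  have hF (Y : Matrix (Fin n) (Fin m) ℝ) : F Y ≤ 2⁻¹ * d ^ 2 := by
    have := ip_le_mul_dualNorm hν0 hν hM Y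
    simp only [F, ip_comm Y M]
    nlinarith [sq_nonneg (ν Y - d)]
  have hbdd : BddAbove (Set.range F) := ⟨_, Set.forall_mem_range.2 hF⟩
  rw [fconj_coe_of_bddAbove hbdd, EReal.coe_eq_coe_iff]
  refine le_antisymm (ciSup_le hF) ?_
  set g := ⨆ Y, F Y
  have hν_zero := map_zero_of_map_smul hν
  have hg : 0 ≤ g := by
    have h : F 0 ≤ g := le_ciSup hbdd 0
    simpa [F, ip, hν_zero] using h
  have hd : d ≤ √(2 * g) := by
    refine csSup_le ⟨ip M 0, 0, by rw [hν_zero]; exact zero_le_one, rfl⟩ ?_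
    rintro _ ⟨Y, hY, rfl⟩
    rcases le_or_gt (ip M Y) 0 with hs | hs
    · exact hs.trans (Real.sqrt_nonneg _)
    · -- `s = ⟨M, Y⟩ > 0` gives `F (s • Y) ≥ s² / 2`, since `ν (s • Y) ≤ s`
      have hFs : F (ip M Y • Y) ≤ g := le_ciSup hbdd _
      simp only [F, hν _ hs, ip_comm _ M, ip_smul_right] at hFs
      have hνs : (ip M Y * ν Y) ^ 2 ≤ ip M Y ^ 2 :=
        pow_le_pow_left₀ (mul_nonneg hs.le (hν0 Y)) (mul_le_of_le_one_right hs.le hY) 2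
      apply Real.le_sqrt_of_sq_le
      nlinarith
  calc 2⁻¹ * d ^ 2 ≤ 2⁻¹ * √(2 * g) ^ 2 := by gcongr; exact dualNorm_nonneg hν0 hν hM
    _ = g := by rw [Real.sq_sqrt (by linarith)]; ring

end HalfSquareConjugate

/-- the biconjugate (convex envelope) of `½‖·‖_F² + χ_{rank ≤ r}` is
`½‖·‖_{F,r*}²`, half the squared low-rank inducing Frobenius norm. -/
theorem biconjugate_eq_half_sq_lowRankFro {n m r : ℕ} (hr1 : 1 ≤ r) (hr2 : r ≤ min n m)
    (M : Matrix (Fin n) (Fin m) ℝ) :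
    fconj (fconj (fRank r)) M = ((2⁻¹ * lowRankFro r M ^ 2 : ℝ) : EReal) := by
  have hrm : r ≤ m := hr2.trans (min_le_right n m)
  rw [show fconj (fRank r) = fun Y => ((2⁻¹ * truncFro r Y ^ 2 : ℝ) : EReal) from
    funext (fconj_fRank hrm)]
  exact fconj_half_sq_eq_half_sq_dualNorm (truncFro_nonneg r) (fun c hc => truncFro_smul hrm hc)
    ⟨fro M * √m, ip_le_mul_truncFro hr1 M⟩
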